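/- Let 0 < a and 0 < b be real constants with a + b < 1. For all sufficiently large n the following holds: whenever the complete graph K_n is written as the union of subgraphs G_1, …, G_q with q ≤ n^a, some G_i has pathwidth greater than n^b. Equivalently, ⌊n^a⌋-pw(K_n) > n^b for all sufficiently large n. -/
import Mathlib


/-- A path decomposition of a simple graph `G`: a sequence of bags covering all
vertices and edges such that the bags containing any fixed vertex form an interval. -/
structure PathDecomp {V : Type} (G : SimpleGraph V) where
  len : ℕ
  bag : Fin len → Finset V
  cover_vertex : ∀ v : V, ∃ i, v ∈ bag i
  cover_edge : ∀ ⦃u v : V⦄, G.Adj u v → ∃ i, u ∈ bag i ∧ v ∈ bag i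
  interval : ∀ (v : V) (i j k : Fin len), i ≤ j → j ≤ k → v ∈ bag i → v ∈ bag k → v ∈ bag j

/-- The pathwidth of a simple graph: minimum over path decompositions of
(maximum bag size minus one). -/
noncomputable def pathwidth {V : Type} (G : SimpleGraph V) : ℕ :=
  sInf {k | ∃ D : PathDecomp G, ∀ i, (D.bag i).card ≤ k + 1}

/-- The `d`-pathwidth of `G`: the smallest `k` such that `G` is the union of `d`
subgraphs each of pathwidth at most `k`. -/
noncomputable def dPathwidth {V : Type} (d : ℕ) (G : SimpleGraph V) : ℕ :=
  sInf {k | ∃ f : Fin d → SimpleGraph V,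
    (∀ i, f i ≤ G) ∧ (⨆ i, f i) = G ∧ ∀ i, pathwidth (f i) ≤ k}

/-- The clique-preserving `d`-pathwidth of `G`: as `dPathwidth`, with the extra
requirement that every clique of `G` is a subgraph of some member of the union. -/
noncomputable def cliquePreservingDPathwidth {V : Type} (d : ℕ) (G : SimpleGraph V) : ℕ :=
  sInf {k | ∃ f : Fin d → SimpleGraph V,
    (∀ i, f i ≤ G) ∧ (⨆ i, f i) = G ∧ (∀ i, pathwidth (f i) ≤ k) ∧
    ∀ s : Set V, G.IsClique s → ∃ i, (f i).IsClique s}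


open Finset

private lemma aux_div {p q x y n : ℕ} (hx : x < n) (hy : y < n)
    (h : p * n + x < q * n + y) : p ≤ q := by
  by_contra hpq
  push_neg at hpq
  have h1 : q + 1 ≤ p := hpq
  have h2 : q * n + y < (q + 1) * n := by
    have : y < n := hy
    nlinarith
  have h3 : (q + 1) * n ≤ p * n := Nat.mul_le_mul_right n h1
  omega

private lemma edge_bound {n : ℕ} {G : SimpleGraph (Fin n)} [Fintype G.edgeSet]
    (D : PathDecomp G) (k : ℕ) (hk : ∀ i, (D.bag i).card ≤ k + 1) :
    G.edgeFinset.card ≤ n * k := by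
  classical
  have hne : ∀ v : Fin n, (univ.filter (fun i => v ∈ D.bag i)).Nonempty := by
    intro v
    obtain ⟨i, hi⟩ := D.cover_vertex v
    exact ⟨i, by simp [hi]⟩
  set l : Fin n → Fin D.len := fun v => (univ.filter (fun i => v ∈ D.bag i)).min' (hne v)
    with hl
  have hmem : ∀ v, v ∈ D.bag (l v) := by
    intro v
    have := Finset.min'_mem _ (hne v)
    simpa [hl] using this
  have hle : ∀ v i, v ∈ D.bag i → l v ≤ i := by
    intro v i hi
    exact Finset.min'_le _ _ (by simp [hi])
  set m : Fin n → ℕ := fun v => (l v : ℕ) * n + (v : ℕ) with hm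
  have hminj : Function.Injective m := by
    intro u v huv
    have h1 : (m u) % n = (u : ℕ) := by
      show ((l u : ℕ) * n + (u : ℕ)) % n = (u : ℕ)
      rw [mul_comm, Nat.mul_add_mod, Nat.mod_eq_of_lt u.isLt]
    have h2 : (m v) % n = (v : ℕ) := by
      show ((l v : ℕ) * n + (v : ℕ)) % n = (v : ℕ)
      rw [mul_comm, Nat.mul_add_mod, Nat.mod_eq_of_lt v.isLt]
    apply Fin.ext
    rw [← h1, ← h2, huv]
  have hgsymm : ∀ u v : Fin n,
      (if m u < m v then ((v, u) : Fin n × Fin n) else (u, v)) =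
      (if m v < m u then ((u, v) : Fin n × Fin n) else (v, u)) := by
    intro u v
    rcases lt_trichotomy (m u) (m v) with h | h | h
    · simp [h, not_lt.2 h.le]
    · have : u = v := hminj h
      subst this; simp
    · simp [h, not_lt.2 h.le]
  set φ : Sym2 (Fin n) → Fin n × Fin n :=
    Sym2.lift ⟨fun u v => if m u < m v then (v, u) else (u, v), hgsymm⟩ with hφ
  have hφ_eq : ∀ u v : Fin n, φ s(u, v) = if m u < m v then (v, u) else (u, v) :=
    fun u v => rfl
  have hrec : ∀ e : Sym2 (Fin n), s((φ e).1, (φ e).2) = e := by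
    intro e
    induction e using Sym2.ind with
    | _ u v =>
      rw [hφ_eq]
      split <;> simp [Sym2.eq_swap]
  set T : Finset (Fin n × Fin n) :=
    univ.biUnion (fun v => ((D.bag (l v)).erase v).image (fun u => (v, u))) with hT
  have key : ∀ u v : Fin n, G.Adj u v → m u < m v → (v, u) ∈ T := by
    intro u v huv hmlt
    have hluv : l u ≤ l v := aux_div u.isLt v.isLt hmlt
    obtain ⟨i, hui, hvi⟩ := D.cover_edge huv
    have hub : u ∈ D.bag (l v) := D.interval u (l u) (l v) i hluv (hle v i hvi) (hmem u) hui
    rw [hT, Finset.mem_biUnion]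
    exact ⟨v, mem_univ v, Finset.mem_image.2 ⟨u, Finset.mem_erase.2 ⟨huv.ne, hub⟩, rfl⟩⟩
  have hmaps : ∀ e ∈ G.edgeFinset, φ e ∈ T := by
    intro e he
    rw [SimpleGraph.mem_edgeFinset] at he
    revert he
    induction e using Sym2.ind with
    | _ u v =>
      intro he
      rw [SimpleGraph.mem_edgeSet] at he
      rw [hφ_eq]
      split_ifs with h
      · exact key u v he h
      · rcases lt_or_eq_of_le (not_lt.1 h) with h' | h'
        · exact key v u he.symm h'
        · exact absurd (hminj h'.symm) he.ne
  have hinj : Set.InjOn φ ↑G.edgeFinset := by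
    intro e1 _ e2 _ heq
    rw [← hrec e1, ← hrec e2, heq]
  have hTcard : T.card ≤ n * k := by
    calc T.card ≤ ∑ v : Fin n, (((D.bag (l v)).erase v).image (fun u => (v, u))).card :=
        Finset.card_biUnion_le
      _ ≤ ∑ _v : Fin n, k := by
        apply Finset.sum_le_sum
        intro v _
        calc (((D.bag (l v)).erase v).image (fun u => (v, u))).card
            ≤ ((D.bag (l v)).erase v).card := Finset.card_image_le
          _ = (D.bag (l v)).card - 1 := Finset.card_erase_of_mem (hmem v)
          _ ≤ k := by have := hk (l v); omega
      _ = n * k := by simp [Finset.card_univ]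
  exact le_trans (Finset.card_le_card_of_injOn φ hmaps hinj) hTcard

private lemma exists_decomp {n : ℕ} (G : SimpleGraph (Fin n)) :
    ∃ D : PathDecomp G, ∀ i, (D.bag i).card ≤ pathwidth G + 1 := by
  have hne : {k | ∃ D : PathDecomp G, ∀ i, (D.bag i).card ≤ k + 1}.Nonempty := by
    refine ⟨n, ⟨⟨1, fun _ => univ, fun v => ⟨0, mem_univ v⟩,
      fun u v _ => ⟨0, mem_univ u, mem_univ v⟩,
      fun _ _ _ _ _ _ _ h => mem_univ _⟩, fun i => by simp⟩⟩
  exact Nat.sInf_mem hne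

private lemma pathwidth_top_le (n : ℕ) : pathwidth (⊤ : SimpleGraph (Fin n)) ≤ n := by
  apply Nat.sInf_le
  exact ⟨⟨1, fun _ => univ, fun v => ⟨0, mem_univ v⟩,
    fun u v _ => ⟨0, mem_univ u, mem_univ v⟩,
    fun _ _ _ _ _ _ _ h => mem_univ _⟩, fun i => by simp⟩

/-- for `0 < a`, `0 < b` with `a + b < 1` and all sufficiently
large `n`: any way of writing `K_n` as a union of at most `n^a` subgraphs has a
member of pathwidth greater than `n^b`; equivalently `⌊n^a⌋-pw(K_n) > n^b`. -/
theorem dPathwidth_complete_graph_lower_bound (a b : ℝ) (ha : 0 < a) (hb : 0 < b)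
    (hab : a + b < 1) :
    ∃ N : ℕ, ∀ n : ℕ, N ≤ n →
      (∀ (q : ℕ) (f : Fin q → SimpleGraph (Fin n)),
        (q : ℝ) ≤ (n : ℝ) ^ a →
        (∀ i, f i ≤ (⊤ : SimpleGraph (Fin n))) →
        (⨆ i, f i) = (⊤ : SimpleGraph (Fin n)) →
        ∃ i, (n : ℝ) ^ b < (pathwidth (f i) : ℝ)) ∧
      (n : ℝ) ^ b <
        (dPathwidth (Nat.floor ((n : ℝ) ^ a)) (⊤ : SimpleGraph (Fin n)) : ℝ) := by
  classical
  have hc : (0:ℝ) < 1 - (a + b) := by linarith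
  have htend : Filter.Tendsto (fun x : ℕ => ((x : ℝ)) ^ (a + b - 1)) Filter.atTop (nhds 0) := by
    have h := (tendsto_rpow_neg_atTop hc).comp
      (tendsto_natCast_atTop_atTop (R := ℝ))
    have heq : (fun x : ℕ => ((x : ℝ)) ^ (a + b - 1)) =
        (fun x : ℝ => x ^ (-(1 - (a + b)))) ∘ (Nat.cast : ℕ → ℝ) := by
      funext x
      show ((x : ℝ)) ^ (a + b - 1) = ((x : ℝ)) ^ (-(1 - (a + b)))
      congr 1
      ring
    rw [heq]
    exact h
  have hev : ∀ᶠ x : ℕ in Filter.atTop, ((x : ℝ)) ^ (a + b - 1) < 1/4 :=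
    htend.eventually (gt_mem_nhds (by norm_num))
  obtain ⟨N0, hN0⟩ := Filter.eventually_atTop.1 hev
  refine ⟨max N0 2, fun n hn => ?_⟩
  have hn2 : 2 ≤ n := le_trans (le_max_right _ _) hn
  have hnN0 : N0 ≤ n := le_trans (le_max_left _ _) hn
  have hnpos : (0:ℝ) < n := by positivity
  -- key numeric bound
  have hnum : 2 * (n : ℝ) ^ (a + b) < (n : ℝ) - 1 := by
    have h1 : ((n : ℝ)) ^ (a + b - 1) < 1/4 := hN0 n hnN0
    have h2 : (n : ℝ) ^ (a + b) = (n : ℝ) ^ (a + b - 1) * n := by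
      have h2' : (n : ℝ) ^ (a + b) = (n : ℝ) ^ (a + b - 1) * (n : ℝ) ^ (1 : ℝ) := by
        rw [← Real.rpow_add hnpos]
        norm_num
      rw [h2', Real.rpow_one]
    have hn2' : (2 : ℝ) ≤ n := by exact_mod_cast hn2
    have h3 : (n : ℝ) ^ (a + b) < n / 4 := by
      rw [h2]
      nlinarith
    linarith
  have hmain : ∀ (q : ℕ) (f : Fin q → SimpleGraph (Fin n)),
      (q : ℝ) ≤ (n : ℝ) ^ a →
      (∀ i, f i ≤ (⊤ : SimpleGraph (Fin n))) →
      (⨆ i, f i) = (⊤ : SimpleGraph (Fin n)) →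
      ∃ i, (n : ℝ) ^ b < (pathwidth (f i) : ℝ) := by
    intro q f hq _hfle hsup
    by_contra hcon
    push_neg at hcon
    -- each f i has few edges
    have hedges : ∀ i, (((f i).edgeFinset.card : ℝ)) ≤ n * (n : ℝ) ^ b := by
      intro i
      obtain ⟨D, hD⟩ := exists_decomp (f i)
      have h1 : (f i).edgeFinset.card ≤ n * pathwidth (f i) := edge_bound D _ hD
      have h2 : ((f i).edgeFinset.card : ℝ) ≤ (n : ℝ) * (pathwidth (f i) : ℝ) := by
        exact_mod_cast h1
      have h3 := hcon i
      nlinarith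
    -- K_n edges covered
    have hsub : (⊤ : SimpleGraph (Fin n)).edgeFinset ⊆
        univ.biUnion (fun i => (f i).edgeFinset) := by
      intro e he
      rw [SimpleGraph.mem_edgeFinset] at he
      revert he
      induction e using Sym2.ind with
      | _ u v =>
        intro he
        rw [SimpleGraph.mem_edgeSet, ← hsup, SimpleGraph.iSup_adj] at he
        obtain ⟨i, hi⟩ := he
        exact Finset.mem_biUnion.2 ⟨i, mem_univ i,
          SimpleGraph.mem_edgeFinset.2 ((f i).mem_edgeSet.2 hi)⟩
    have hcard1 : (⊤ : SimpleGraph (Fin n)).edgeFinset.card ≤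
        ∑ i : Fin q, (f i).edgeFinset.card :=
      le_trans (Finset.card_le_card hsub) Finset.card_biUnion_le
    have htop : (⊤ : SimpleGraph (Fin n)).edgeFinset.card = n.choose 2 := by
      rw [SimpleGraph.card_edgeFinset_top_eq_card_choose_two, Fintype.card_fin]
    have hsum : ((∑ i : Fin q, (f i).edgeFinset.card : ℕ) : ℝ) ≤
        (q : ℝ) * ((n : ℝ) * (n : ℝ) ^ b) := by
      push_cast
      calc (∑ i : Fin q, ((f i).edgeFinset.card : ℝ))
          ≤ ∑ _i : Fin q, (n : ℝ) * (n : ℝ) ^ b :=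
            Finset.sum_le_sum (fun i _ => hedges i)
        _ = (q : ℝ) * ((n : ℝ) * (n : ℝ) ^ b) := by
            simp [Finset.sum_const, Finset.card_univ, mul_comm]
    have hchain : ((n.choose 2 : ℕ) : ℝ) ≤ (n : ℝ) ^ a * ((n : ℝ) * (n : ℝ) ^ b) := by
      have h0 : ((n.choose 2 : ℕ) : ℝ) ≤ ((∑ i : Fin q, (f i).edgeFinset.card : ℕ) : ℝ) := by
        exact_mod_cast htop ▸ hcard1
      have h1 : (q : ℝ) * ((n : ℝ) * (n : ℝ) ^ b) ≤ (n : ℝ) ^ a * ((n : ℝ) * (n : ℝ) ^ b) := by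
        apply mul_le_mul_of_nonneg_right hq
        positivity
      linarith
    have hc2 : ((n.choose 2 : ℕ) : ℝ) = (n : ℝ) * ((n : ℝ) - 1) / 2 := Nat.cast_choose_two ℝ n
    have hab' : (n : ℝ) ^ a * ((n : ℝ) * (n : ℝ) ^ b) = (n : ℝ) ^ (a + b) * n := by
      rw [Real.rpow_add hnpos]; ring
    rw [hc2, hab'] at hchain
    nlinarith [mul_lt_mul_of_pos_right hnum hnpos]
  refine ⟨hmain, ?_⟩
  -- second conjunct
  set d := Nat.floor ((n : ℝ) ^ a) with hd
  have hna1 : (1 : ℝ) ≤ (n : ℝ) ^ a := by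
    have h1 : (1 : ℝ) ≤ (n : ℝ) := by exact_mod_cast Nat.one_le_of_lt hn2
    calc (1 : ℝ) = (1 : ℝ) ^ a := (Real.one_rpow a).symm
      _ ≤ (n : ℝ) ^ a := Real.rpow_le_rpow (by norm_num) h1 ha.le
  have hd1 : 1 ≤ d := Nat.le_floor (by exact_mod_cast hna1)
  haveI : Nonempty (Fin d) := ⟨⟨0, hd1⟩⟩
  have hSne : {k | ∃ f : Fin d → SimpleGraph (Fin n),
      (∀ i, f i ≤ (⊤ : SimpleGraph (Fin n))) ∧ (⨆ i, f i) = ⊤ ∧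
      ∀ i, pathwidth (f i) ≤ k}.Nonempty := by
    refine ⟨n, fun _ => ⊤, fun _ => le_rfl, iSup_const, fun _ => pathwidth_top_le n⟩
  have hmem := Nat.sInf_mem hSne
  obtain ⟨f, hfle, hfsup, hfpw⟩ := hmem
  have hdle : (d : ℝ) ≤ (n : ℝ) ^ a := Nat.floor_le (by positivity)
  obtain ⟨i, hi⟩ := hmain d f hdle hfle hfsup
  have : (pathwidth (f i) : ℝ) ≤ (dPathwidth d (⊤ : SimpleGraph (Fin n)) : ℝ) := by
    exact_mod_cast hfpw i
  linarith
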